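/- arXiv:1506.05835 — 2 statements merged into one kernel-verified Lean document; each statement's English description precedes it below -/
import Mathlib

section
/- Let T be a homeomorphism of a compact metric space X with the multishadowing property. Then every chain recurrent point is nonwandering, i.e., CR(X,T) = Ω(X,T). -/
open Metric Filter Set Topology
open scoped Classical

variable {X : Type*}

/-- A set of naturals is syndetic: bounded gaps. -/
def Syndetic (S : Set ℕ) : Prop := ∃ n : ℕ, ∀ m : ℕ, ∃ k ∈ S, m ≤ k ∧ k ≤ m + n

/-- Forward orbit of a point. -/
def fwdOrbit (T : X → X) (y : X) : Set X := Set.range fun k : ℕ => T^[k] y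

/-- A point is minimal (almost periodic): its forward orbit closure is a minimal set. -/
def IsMinimalPt [TopologicalSpace X] (T : X → X) (y : X) : Prop :=
  ∀ z ∈ closure (fwdOrbit T y), closure (fwdOrbit T z) = closure (fwdOrbit T y)

/-- ℤ-iteration of a homeomorphism. -/
noncomputable def zIter [TopologicalSpace X] (T : X ≃ₜ X) (n : ℤ) : X → X :=
  if 0 ≤ n then (⇑T)^[n.toNat] else (⇑T.symm)^[(-n).toNat]

/-- `A` is an `ε`-network: every point of the space is within `ε` of `A`. -/
def IsNet [PseudoMetricSpace X] (ε : ℝ) (A : Set X) : Prop :=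
  ∀ x : X, ∃ a ∈ A, dist x a ≤ ε

/-- A point is nonwandering (w.r.t. forward iterates). -/
def NonWandering [TopologicalSpace X] (T : X → X) (x : X) : Prop :=
  ∀ U : Set X, IsOpen U → x ∈ U → ∃ k : ℕ, 1 ≤ k ∧ ((fun p => T^[k] p) '' U ∩ U).Nonempty

/-- One-sided `d`-pseudotrajectory. -/
def IsPseudoTraj [PseudoMetricSpace X] (T : X → X) (d : ℝ) (x : ℕ → X) : Prop :=
  ∀ k : ℕ, dist (x (k + 1)) (T (x k)) ≤ d

/-- Two-sided `d`-pseudotrajectory. -/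
def IsPseudoTrajZ [PseudoMetricSpace X] (T : X → X) (d : ℝ) (x : ℤ → X) : Prop :=
  ∀ k : ℤ, dist (x (k + 1)) (T (x k)) ≤ d

/-- A chain recurrent point. -/
def ChainRec [PseudoMetricSpace X] (T : X → X) (x : X) : Prop :=
  ∀ d > (0 : ℝ), ∃ n : ℕ, 1 ≤ n ∧ ∃ c : ℕ → X, c 0 = x ∧ c n = x ∧
    ∀ k < n, dist (c (k + 1)) (T (c k)) ≤ d

/-- ω-limit set of a point under a map. -/
def omegaSet [TopologicalSpace X] (T : X → X) (y : X) : Set X :=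
  {p | ∃ φ : ℕ → ℕ, StrictMono φ ∧ Tendsto (fun n => T^[φ n] y) atTop (nhds p)}

/-- The set of recurrent points (`x ∈ ω(x)`). -/
def RecurrentPts [TopologicalSpace X] (T : X → X) : Set X := {x | x ∈ omegaSet T x}

/-- The multishadowing property (for homeomorphisms, two-sided). -/
def Multishadowing [PseudoMetricSpace X] (T : X ≃ₜ X) : Prop :=
  ∀ ε > (0 : ℝ), ∃ d > (0 : ℝ), ∀ x : ℤ → X, IsPseudoTrajZ (⇑T) d x →
    ∃ Y : Finset X, ∀ k : ℤ, ∃ y ∈ Y, dist (x k) (zIter T k y) < ε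

/-- Topological support of a measure: points all of whose open neighborhoods
have positive measure. -/
def msupp [TopologicalSpace X] [MeasurableSpace X] (μ : MeasureTheory.Measure X) : Set X :=
  {x | ∀ U : Set X, IsOpen U → x ∈ U → 0 < μ U}

/-- Counting function for density computations. -/
noncomputable def cnt (K : Set ℕ) (N : ℕ) : ℝ :=
  ((Finset.range (N + 1)).filter (· ∈ K)).card

/-!
A closed `d`-chain through `x`, repeated periodically, is a two-sided `d`-pseudotrajectory that
sits at `x` at every multiple of the period `n`. If it is `ε`-traced by the orbits of a finite set
`Y`, then by pigeonhole one `y ∈ Y` has `T^[a n] y` and `T^[b n] y` both `ε`-close to `x` for some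
`a < b`, so the `ε`-ball around `x` returns to itself after `(b - a) n` steps.
Conversely, a return `T^[k] p` of a point `p` near `x` to the vicinity of `x` closes the orbit
segment of `p` into a chain through `x`, using only continuity of `T` at `x`.
-/

lemma zIter_natCast [TopologicalSpace X] (T : X ≃ₜ X) (m : ℕ) : zIter T m = (⇑T)^[m] := by
  simp [zIter]

lemma Int.toNat_emod_add_one {n : ℕ} (hn : 0 < n) (k : ℤ) :
    ((k + 1) % n).toNat = ((k % n).toNat + 1) % n := by
  have hr : 0 ≤ k % n := Int.emod_nonneg k (by exact_mod_cast hn.ne')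
  rw [← Int.toNat_natCast (((k % n).toNat + 1) % n), Int.natCast_mod]
  push_cast
  rw [Int.toNat_of_nonneg hr, Int.emod_add_emod]

section Chains

variable [PseudoMetricSpace X] {T : X → X} {d : ℝ}

lemma isPseudoTrajZ_periodic {n : ℕ} (hn : 0 < n) {c : ℕ → X} (hcycle : c n = c 0)
    (hc : ∀ k < n, dist (c (k + 1)) (T (c k)) ≤ d) :
    IsPseudoTrajZ T d (fun k : ℤ => c (k % n).toNat) := by
  intro k
  show dist (c ((k + 1) % n).toNat) (T (c (k % n).toNat)) ≤ d
  rw [Int.toNat_emod_add_one hn]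
  set r := (k % n).toNat
  have hr : r < n := by
    have := Int.emod_lt_of_pos k (by exact_mod_cast hn : (0 : ℤ) < n)
    omega
  have hnext : c ((r + 1) % n) = c (r + 1) := by
    rcases (show r + 1 ≤ n from hr).eq_or_lt with hlast | hmid
    · rw [hlast, Nat.mod_self, hcycle]
    · rw [Nat.mod_eq_of_lt hmid]
  rw [hnext]
  exact hc r hr

lemma chainRec_of_nonWandering {x : X} (hT : ContinuousAt T x) (hx : NonWandering T x) :
    ChainRec T x := by
  intro d hd
  obtain ⟨δ₀, hδ₀, hcont⟩ := continuousAt_iff.mp hT (d / 2) (half_pos hd)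
  set δ := min δ₀ (d / 2)
  have hδ : 0 < δ := lt_min hδ₀ (half_pos hd)
  obtain ⟨k, hk, -, ⟨p, hp, rfl⟩, hret⟩ := hx (ball x δ) isOpen_ball (mem_ball_self hδ)
  have hpx : dist p x < δ := hp
  have hret' : dist x (T^[k] p) < δ := by rw [dist_comm]; exact hret
  let c : ℕ → X := fun j => if j = 0 ∨ k ≤ j then x else T^[j] p
  have hc_near : ∀ j, 1 ≤ j → j ≤ k → dist (c j) (T^[j] p) < δ := by
    intro j hj1 hjk
    rcases hjk.eq_or_lt with rfl | hjk
    · simpa [c] using hret'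
    · simpa [c, show j ≠ 0 by omega, show ¬k ≤ j by omega] using hδ
  have hTc_near : ∀ j < k, dist (T (c j)) (T^[j + 1] p) < d / 2 := by
    intro j hj
    rcases Nat.eq_zero_or_pos j with rfl | hjpos
    · simpa [c, dist_comm] using hcont (hpx.trans_le (min_le_left _ _))
    · simpa [c, show j ≠ 0 by omega, show ¬k ≤ j by omega,
        Function.iterate_succ_apply'] using half_pos hd
  refine ⟨k, hk, c, by simp [c], by simp [c], fun j hj => ?_⟩
  calc dist (c (j + 1)) (T (c j))
      ≤ dist (c (j + 1)) (T^[j + 1] p) + dist (T (c j)) (T^[j + 1] p) :=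
        dist_triangle_right _ _ _
    _ ≤ d / 2 + d / 2 :=
        add_le_add ((hc_near _ (by omega) hj).le.trans (min_le_right _ _)) (hTc_near j hj).le
    _ = d := add_halves d

end Chains

lemma exists_iterate_image_inter_nonempty_of_finite {T : X → X} {U Y : Set X} (hY : Y.Finite)
    {n : ℕ} (hn : 0 < n) (hvisit : ∀ j : ℕ, ∃ y ∈ Y, T^[j * n] y ∈ U) :
    ∃ k : ℕ, 1 ≤ k ∧ ((fun p => T^[k] p) '' U ∩ U).Nonempty := by
  choose g hgY hgU using hvisit
  obtain ⟨a, b, hab, hg⟩ := hY.exists_lt_map_eq_of_forall_mem hgY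
  refine ⟨(b - a) * n, Nat.mul_pos (by omega) hn, _, ⟨_, hgU a, rfl⟩, ?_⟩
  have hsplit : (b - a) * n + a * n = b * n := by rw [← Nat.add_mul, Nat.sub_add_cancel hab.le]
  simpa only [← Function.iterate_add_apply, hsplit, hg] using hgU b

lemma Multishadowing.nonWandering_of_chainRec [PseudoMetricSpace X] {T : X ≃ₜ X}
    (hT : Multishadowing T) {x : X} (hx : ChainRec T x) : NonWandering T x := by
  intro U hU hxU
  obtain ⟨ε, hε, hball⟩ := isOpen_iff.mp hU x hxU
  obtain ⟨d, hd, hshadow⟩ := hT ε hε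
  obtain ⟨n, hn, c, hc0, hcn, hc⟩ := hx d hd
  obtain ⟨Y, hY⟩ := hshadow _ (isPseudoTrajZ_periodic hn (hcn.trans hc0.symm) hc)
  refine exists_iterate_image_inter_nonempty_of_finite Y.finite_toSet hn fun j => ?_
  obtain ⟨y, hy, hdist⟩ := hY ((j * n : ℕ) : ℤ)
  have hperiod : (((j * n : ℕ) : ℤ) % n).toNat = 0 := by simp
  rw [hperiod, hc0, zIter_natCast] at hdist
  exact ⟨y, hy, hball (mem_ball_comm.mp hdist)⟩

theorem stmt11_general [MetricSpace X] (T : X ≃ₜ X)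
    (h : Multishadowing T) :
    {x : X | ChainRec (⇑T) x} = {x : X | NonWandering (⇑T) x} :=
  Set.ext fun _ =>
    ⟨h.nonWandering_of_chainRec, chainRec_of_nonWandering T.continuous.continuousAt⟩

theorem stmt11 [MetricSpace X] [CompactSpace X] (T : X ≃ₜ X)
    (h : Multishadowing T) :
    {x : X | ChainRec (⇑T) x} = {x : X | NonWandering (⇑T) x} :=
  stmt11_general T h
end

section
/- Let T : X → X be a continuous map of a compact metric space. For every ε > 0 there exists δ > 0 such that for every δ-pseudotrajectory {x_k}_{k≥0}, the set {k ∈ ℕ : x_k ∈ U_ε(closure(M(X,T)))} is syndetic in ℕ. -/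
open Metric Filter Set Topology
open scoped Classical

variable {X : Type*}

/-
Suppose the claim fails for some ε. Then for every n there is a (1/(n+1))-pseudotrajectory which,
after a shift, stays outside the ε-neighbourhood of the closure of the minimal points for times
0, …, n. By compactness of `ℕ → X` these pseudotrajectories accumulate on a genuine orbit, which
then stays outside that open neighbourhood forever, and so does its orbit closure. But every
orbit closure contains a minimal point (Zorn's lemma on nonempty closed invariant sets).
-/

lemma mapsTo_fwdOrbit (T : X → X) (y : X) : MapsTo T (fwdOrbit T y) (fwdOrbit T y) := by
  rintro _ ⟨k, rfl⟩
  exact ⟨k + 1, Function.iterate_succ_apply' T k y⟩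

section MinimalPoints

variable [TopologicalSpace X] {T : X → X}

lemma mapsTo_closure_fwdOrbit (hT : Continuous T) (y : X) :
    MapsTo T (closure (fwdOrbit T y)) (closure (fwdOrbit T y)) :=
  (mapsTo_fwdOrbit T y).closure hT

lemma closure_fwdOrbit_subset {K : Set X} {y : X} (hK : IsClosed K) (hKT : MapsTo T K K)
    (hy : y ∈ K) : closure (fwdOrbit T y) ⊆ K :=
  closure_minimal (by rintro _ ⟨k, rfl⟩; exact hKT.iterate k hy) hK

lemma exists_minimal_closed_invariant_subset [CompactSpace X] {K : Set X} (hne : K.Nonempty)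
    (hK : IsClosed K) (hKT : MapsTo T K K) :
    ∃ K₀ ⊆ K, Minimal (fun A : Set X => A.Nonempty ∧ IsClosed A ∧ MapsTo T A A) K₀ := by
  refine zorn_superset_nonempty _ (fun c hc hchain hcne => ?_) K ⟨hne, hK, hKT⟩
  have hdir : DirectedOn (· ⊇ ·) c := fun A hA B hB =>
    (hchain.total hA hB).elim (fun hAB => ⟨A, hA, subset_rfl, hAB⟩)
      (fun hBA => ⟨B, hB, hBA, subset_rfl⟩)
  have := hcne.to_subtype
  have hinter_ne : (⋂₀ c).Nonempty :=
    IsCompact.nonempty_sInter_of_directed_nonempty_isCompact_isClosed hdir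
      (fun A hA => (hc hA).1) (fun A hA => (hc hA).2.1.isCompact) (fun A hA => (hc hA).2.1)
  refine ⟨⋂₀ c, ⟨hinter_ne, isClosed_sInter fun A hA => (hc hA).2.1, ?_⟩,
    fun A hA => sInter_subset_of_mem hA⟩
  exact fun x hx => mem_sInter.2 fun A hA => (hc hA).2.2 (mem_sInter.1 hx A hA)

lemma isMinimalPt_of_mem_minimal (hT : Continuous T) {K : Set X}
    (hK : Minimal (fun A : Set X => A.Nonempty ∧ IsClosed A ∧ MapsTo T A A) K) {y : X}
    (hy : y ∈ K) : IsMinimalPt T y := by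
  have closure_eq : ∀ z ∈ K, closure (fwdOrbit T z) = K := fun z hz =>
    hK.eq_of_subset (t := closure (fwdOrbit T z))
      ⟨⟨z, subset_closure ⟨0, rfl⟩⟩, isClosed_closure, mapsTo_closure_fwdOrbit hT z⟩
      (closure_fwdOrbit_subset hK.prop.2.1 hK.prop.2.2 hz)
  intro z hz
  rw [closure_eq y hy] at hz
  rw [closure_eq y hy, closure_eq z hz]

lemma exists_isMinimalPt_mem_closure_fwdOrbit [CompactSpace X] (hT : Continuous T) (x : X) :
    ∃ m ∈ closure (fwdOrbit T x), IsMinimalPt T m := by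
  obtain ⟨K, hKsub, hK⟩ := exists_minimal_closed_invariant_subset
    (K := closure (fwdOrbit T x)) ⟨x, subset_closure ⟨0, rfl⟩⟩ isClosed_closure
    (mapsTo_closure_fwdOrbit hT x)
  obtain ⟨m, hm⟩ := hK.prop.1
  exact ⟨m, hKsub hm, isMinimalPt_of_mem_minimal hT hK hm⟩

end MinimalPoints

section PseudoTrajectories

variable [MetricSpace X] {T : X → X}

lemma IsPseudoTraj.shift {d : ℝ} {x : ℕ → X} (hx : IsPseudoTraj T d x) (m : ℕ) :
    IsPseudoTraj T d fun j => x (m + j) :=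
  fun k => hx (m + k)

lemma eq_iterate_of_tendsto_pseudoTraj (hT : Continuous T) {ι : Type*} {l : Filter ι} [l.NeBot]
    {δ : ι → ℝ} {y : ι → ℕ → X} {z : ℕ → X} (hδ : Tendsto δ l (𝓝 0))
    (hy : ∀ i, IsPseudoTraj T (δ i) (y i)) (hz : ∀ j, Tendsto (fun i => y i j) l (𝓝 (z j))) :
    ∀ j, z j = T^[j] (z 0) := by
  have hstep : ∀ j, z (j + 1) = T (z j) := fun j => by
    have hdist_lim : Tendsto (fun i => dist (y i (j + 1)) (T (y i j))) l
        (𝓝 (dist (z (j + 1)) (T (z j)))) := (hz (j + 1)).dist ((hT.tendsto _).comp (hz j))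
    have hdist_zero : Tendsto (fun i => dist (y i (j + 1)) (T (y i j))) l (𝓝 0) :=
      squeeze_zero (fun _ => dist_nonneg) (fun i => hy i j) hδ
    exact dist_eq_zero.1 (tendsto_nhds_unique hdist_lim hdist_zero)
  intro j
  induction j with
  | zero => rfl
  | succ k ih => rw [Function.iterate_succ_apply', ← ih, hstep]

lemma exists_forall_iterate_mem_of_pseudoTraj [CompactSpace X] (hT : Continuous T) {F : Set X}
    (hF : IsClosed F)
    (h : ∀ n : ℕ, ∃ y : ℕ → X, IsPseudoTraj T (1 / (n + 1 : ℝ)) y ∧ ∀ j ≤ n, y j ∈ F) :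
    ∃ z : X, ∀ j, T^[j] z ∈ F := by
  choose y hy hyF using h
  set U := Ultrafilter.of (atTop : Filter ℕ)
  have hU : (U : Filter ℕ) ≤ atTop := Ultrafilter.of_le atTop
  obtain ⟨z, -, hUz⟩ := isCompact_univ.ultrafilter_le_nhds (U.map y) (by simp)
  have hz : ∀ j, Tendsto (fun n => y n j) U (𝓝 (z j)) := tendsto_pi_nhds.1 hUz
  have horbit := eq_iterate_of_tendsto_pseudoTraj hT
    (tendsto_one_div_add_atTop_nhds_zero_nat.mono_left hU) hy hz
  refine ⟨z 0, fun j => horbit j ▸ hF.mem_of_tendsto (hz j) ?_⟩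
  exact ((eventually_ge_atTop j).filter_mono hU).mono fun n hn => hyF n j hn

end PseudoTrajectories

theorem stmt15 [MetricSpace X] [CompactSpace X] (T : X → X) (hT : Continuous T) :
    ∀ ε > (0 : ℝ), ∃ δ > (0 : ℝ), ∀ x : ℕ → X, IsPseudoTraj T δ x →
      Syndetic {k : ℕ | x k ∈ Metric.thickening ε (closure {y : X | IsMinimalPt T y})} := by
  intro ε hε
  by_contra h
  push Not at h
  set F := (thickening ε (closure {y : X | IsMinimalPt T y}))ᶜ
  have long_excursions : ∀ n : ℕ, ∃ y : ℕ → X,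
      IsPseudoTraj T (1 / (n + 1 : ℝ)) y ∧ ∀ j ≤ n, y j ∈ F := by
    intro n
    obtain ⟨x, hx, hgap⟩ := h (1 / (n + 1 : ℝ)) (by positivity)
    obtain ⟨m, hm⟩ := not_forall.1 (not_exists.1 hgap n)
    push Not at hm
    exact ⟨fun j => x (m + j), hx.shift m, fun j hj hmem => (hm (m + j) hmem (by omega)).not_ge
      (by omega)⟩
  obtain ⟨z, hz⟩ := exists_forall_iterate_mem_of_pseudoTraj hT
    isOpen_thickening.isClosed_compl long_excursions
  obtain ⟨m, hm, hmin⟩ := exists_isMinimalPt_mem_closure_fwdOrbit hT z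
  have horbit_closure : closure (fwdOrbit T z) ⊆ F :=
    closure_minimal (by rintro _ ⟨k, rfl⟩; exact hz k) isOpen_thickening.isClosed_compl
  exact horbit_closure hm (self_subset_thickening hε _ (subset_closure hmin))
end
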